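/- arXiv:2208.14092 — 2 statements merged into one kernel-verified Lean document; each statement's English description precedes it below -/
import Mathlib

section
/- Let d, N ≥ 1 be integers, let Z be a measurable space with probability measure 𝒟, and let ℓ : ℝ^d × Z → [0,1] be measurable. Let the prior P be the standard Gaussian N(0, I_d) on ℝ^d and let the posterior Q be the Gaussian N(0, Σ_PT) for a symmetric positive definite d×d real matrix Σ_PT. Then for every δ ∈ (0,1), with probability at least 1 − δ over an i.i.d. sample S = (z_1, …, z_N) drawn from 𝒟^N, the expected risk R(Q) = E_{θ∼Q} E_{z∼𝒟}[ℓ(θ,z)] satisfies R(Q) ≤ R̂_S(Q) + sqrt( (D(Q,P) + 2 log(1/δ) + 2 log N + 4) / (4N − 2) ), where R̂_S(Q) = E_{θ∼Q}[(1/N) Σ_{i=1}^N ℓ(θ, z_i)] is the empirical risk and D(Q,P) = tr(Σ_PT − I) − log det(Σ_PT). -/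
open MeasureTheory Matrix

/-- The Gaussian measure `N(m, S)` on `ℝ^d`, given by its density with respect to
Lebesgue measure. -/
noncomputable def gaussian (d : ℕ) (m : Fin d → ℝ) (S : Matrix (Fin d) (Fin d) ℝ) :
    Measure (Fin d → ℝ) :=
  volume.withDensity fun θ =>
    ENNReal.ofReal ((2 * Real.pi) ^ (-(d : ℝ) / 2) * S.det ^ (-(1 : ℝ) / 2) *
      Real.exp (-(1 / 2) * ((θ - m) ⬝ᵥ S⁻¹.mulVec (θ - m))))

section Aux

open Real


lemma hoeff_Dpos {p : ℝ} (hp0 : 0 ≤ p) (hp1 : p ≤ 1) (t : ℝ) :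
    0 < 1 - p + p * exp (-t) := by
  rcases hp1.lt_or_eq with h | h
  · have h2 : 0 ≤ p * exp (-t) := mul_nonneg hp0 (exp_nonneg _)
    linarith
  · subst h; simpa using exp_pos (-t)

lemma hoeffding_scalar {p s : ℝ} (hp0 : 0 ≤ p) (hp1 : p ≤ 1) (hs : 0 ≤ s) :
    1 - p + p * exp (-s) ≤ exp (-(s * p) + s ^ 2 / 8) := by
  set D : ℝ → ℝ := fun t => 1 - p + p * exp (-t) with hDdef
  have hDpos : ∀ t, 0 < D t := fun t => hoeff_Dpos hp0 hp1 t
  have hDne : ∀ t, D t ≠ 0 := fun t => (hDpos t).ne'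
  have hD' : ∀ t : ℝ, HasDerivAt D (-(p * exp (-t))) t := by
    intro t
    have h1 : HasDerivAt (fun u : ℝ => exp (-u)) (exp (-t) * -1) t :=
      (Real.hasDerivAt_exp (-t)).comp t (hasDerivAt_neg t)
    have := ((h1.const_mul p).const_add (1 - p))
    exact this.congr_deriv (by ring)
  set φ : ℝ → ℝ := fun t => t / 4 - p + p * exp (-t) / D t with hφdef
  have hφ' : ∀ t : ℝ, HasDerivAt φ
      (1 / 4 - p * (1 - p) * exp (-t) / (D t) ^ 2) t := by
    intro t
    have hN : HasDerivAt (fun u : ℝ => p * exp (-u)) (-(p * exp (-t))) t := by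
      have h1 : HasDerivAt (fun u : ℝ => exp (-u)) (exp (-t) * -1) t :=
        (Real.hasDerivAt_exp (-t)).comp t (hasDerivAt_neg t)
      exact (h1.const_mul p).congr_deriv (by ring)
    have hdiv := hN.div (hD' t) (hDne t)
    have hlin : HasDerivAt (fun u : ℝ => u / 4 - p) (1 / 4) t := by
      simpa using ((hasDerivAt_id t).div_const 4).sub_const p
    have := hlin.add hdiv
    refine this.congr_deriv ?_
    simp only [hDdef]
    have hne : 1 - p + p * exp (-t) ≠ 0 := (hoeff_Dpos hp0 hp1 t).ne'
    field_simp
    ring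
  have hφmono : Monotone φ := by
    apply monotone_of_deriv_nonneg
    · exact fun t => (hφ' t).differentiableAt
    · intro t
      rw [(hφ' t).deriv]
      simp only [hDdef]
      have h3 : 0 < (1 - p + p * exp (-t)) ^ 2 := pow_pos (hoeff_Dpos hp0 hp1 t) 2
      rw [sub_nonneg, div_le_iff₀ h3]
      nlinarith [sq_nonneg ((1 - p) - p * exp (-t))]
  have hφ0 : φ 0 = 0 := by
    have hD0 : D 0 = 1 := by simp [hDdef]
    simp [hφdef, hD0]
  set f : ℝ → ℝ := fun t => -(t * p) + t ^ 2 / 8 - log (D t) with hfdef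
  have hf' : ∀ t : ℝ, HasDerivAt f (φ t) t := by
    intro t
    have hlog : HasDerivAt (fun u => log (D u)) (-(p * exp (-t)) / D t) t :=
      (hD' t).log (hDne t)
    have hpoly : HasDerivAt (fun u : ℝ => -(u * p) + u ^ 2 / 8)
        (-p + t * 2 / 8) t := by
      have h1 : HasDerivAt (fun u : ℝ => -(u * p)) (-p) t := by
        exact ((hasDerivAt_id' t).mul_const p).neg.congr_deriv (by ring)
      have h2 : HasDerivAt (fun u : ℝ => u ^ 2 / 8) (2 * t ^ 1 / 8) t := by
        simpa using (hasDerivAt_pow 2 t).div_const 8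
      exact (h1.add h2).congr_deriv (by ring)
    have := hpoly.sub hlog
    refine this.congr_deriv ?_
    simp only [hφdef]
    field_simp
    ring
  have hfmono : MonotoneOn f (Set.Ici (0 : ℝ)) := by
    apply monotoneOn_of_deriv_nonneg (convex_Ici 0)
    · exact (fun t _ => ((hf' t).differentiableAt).continuousAt.continuousWithinAt)
    · exact fun t _ => ((hf' t).differentiableAt).differentiableWithinAt
    · intro t ht
      rw [(hf' t).deriv]
      rw [interior_Ici] at ht
      calc (0:ℝ) = φ 0 := hφ0.symm
        _ ≤ φ t := hφmono (le_of_lt ht)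
  have hf0 : f 0 = 0 := by
    have hD0 : D 0 = 1 := by simp [hDdef]
    simp [hfdef, hD0]
  have hfs : 0 ≤ f s := by
    have := hfmono (Set.self_mem_Ici) (Set.mem_Ici.2 hs) hs
    linarith [hf0 ▸ this]
  have hlog : log (D s) ≤ -(s * p) + s ^ 2 / 8 := by
    simp only [hfdef] at hfs; linarith
  calc D s = exp (log (D s)) := (exp_log (hDpos s)).symm
    _ ≤ exp (-(s * p) + s ^ 2 / 8) := exp_le_exp.2 hlog


end Aux

section gaussfacts

open Real

variable {d : ℕ} {S : Matrix (Fin d) (Fin d) ℝ} (hS : S.PosDef)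

-- the square root of S⁻¹
open scoped MatrixOrder in
include hS in
lemma exists_sqrtInv : ∃ M : Matrix (Fin d) (Fin d) ℝ,
    M * M = S⁻¹ ∧ Mᵀ = M ∧ |M.det| = Real.sqrt S.det⁻¹ := by
  have hinv : S⁻¹.PosDef := hS.inv
  set M := CFC.sqrt S⁻¹ with hMdef
  refine ⟨M, CFC.sqrt_mul_sqrt_self _ hinv.posSemidef.nonneg, ?_, ?_⟩
  · have hherm : Mᴴ = M := (CFC.sqrt_nonneg S⁻¹).posSemidef.isHermitian
    ext i j
    have := congrFun (congrFun hherm i) j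
    simpa [Matrix.conjTranspose_apply] using this
  · have hdet2 : M.det * M.det = S⁻¹.det := by
      rw [← Matrix.det_mul, CFC.sqrt_mul_sqrt_self _ hinv.posSemidef.nonneg]
    have : |M.det| = Real.sqrt (M.det * M.det) := by
      rw [← Real.sqrt_mul_self_eq_abs]
    rw [this, hdet2, Matrix.det_nonsing_inv, Ring.inverse_eq_inv']

include hS in
lemma integral_gauss_quadratic :
    ∫ x : Fin d → ℝ, Real.exp (-(1 / 2) * (x ⬝ᵥ S⁻¹.mulVec x)) =
      Real.sqrt (2 * π) ^ d * Real.sqrt S.det := by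
  obtain ⟨M, hMM, hMT, hMdet⟩ := exists_sqrtInv (hS := hS)
  have hdetS : 0 < S.det := hS.det_pos
  have hdetM : M.det ≠ 0 := by
    intro h
    rw [h, abs_zero] at hMdet
    have : (0:ℝ) < Real.sqrt S.det⁻¹ := Real.sqrt_pos.2 (by positivity)
    exact this.ne' hMdet.symm
  -- quadratic form as a norm squared
  have hquad : ∀ x : Fin d → ℝ, x ⬝ᵥ S⁻¹.mulVec x = (M.mulVec x) ⬝ᵥ (M.mulVec x) := by
    intro x
    rw [← hMM, ← Matrix.mulVec_mulVec, Matrix.dotProduct_mulVec x M, ← Matrix.mulVec_transpose,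
      hMT]
  -- the standard gaussian function on the product space
  set g : (Fin d → ℝ) → ℝ := fun y => ∏ i, Real.exp (-(1/2) * (y i)^2) with hgdef
  have hg : ∀ y : Fin d → ℝ, Real.exp (-(1/2) * (y ⬝ᵥ y)) = g y := by
    intro y
    simp only [hgdef, ← Real.exp_sum]
    congr 1
    simp only [dotProduct, Finset.mul_sum]
    exact Finset.sum_congr rfl (fun i _ => by ring)
  have hgcont : Continuous g := by
    apply continuous_finset_prod
    intro i _
    exact (Real.continuous_exp.comp (by fun_prop))
  have hgint : Integrable g := by
    apply Integrable.fintype_prod (f := fun (_ : Fin d) (x : ℝ) => Real.exp (-(1/2) * x^2))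
    intro i
    simpa using integrable_exp_neg_mul_sq (by norm_num : (0:ℝ) < 1/2)
  have hgval : ∫ y : Fin d → ℝ, g y = Real.sqrt (2 * π) ^ d := by
    rw [hgdef, MeasureTheory.volume_pi]
    beta_reduce
    rw [MeasureTheory.integral_fintype_prod_eq_pow (ι := Fin d)
      (f := fun (x : ℝ) => Real.exp (-(1/2) * x^2))]
    simp only [Fintype.card_fin]
    congr 1
    have := integral_gaussian (1/2 : ℝ)
    rw [this]
    rw [div_div_eq_mul_div, mul_comm π 2, mul_div_assoc]
    norm_num
  -- change of variables
  have hmap : Measure.map (Matrix.toLin' M) volume =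
      ENNReal.ofReal |M.det|⁻¹ • volume := by
    have := Real.map_matrix_volume_pi_eq_smul_volume_pi (M := M) hdetM
    rwa [abs_inv] at this
  have hTmeas : Measurable (Matrix.toLin' M) :=
    (Matrix.toLin' M).continuous_of_finiteDimensional.measurable
  have key : ∫ x : Fin d → ℝ, g (Matrix.toLin' M x) = |M.det|⁻¹ * ∫ y, g y := by
    rw [← MeasureTheory.integral_map hTmeas.aemeasurable hgcont.aestronglyMeasurable, hmap,
      MeasureTheory.integral_smul_measure]
    rw [ENNReal.toReal_ofReal (by positivity)]
    rfl
  calc ∫ x : Fin d → ℝ, Real.exp (-(1 / 2) * (x ⬝ᵥ S⁻¹.mulVec x))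
      = ∫ x : Fin d → ℝ, g (Matrix.toLin' M x) := by
        congr 1; ext x
        rw [hquad x, Matrix.toLin'_apply, hg]
    _ = |M.det|⁻¹ * ∫ y, g y := key
    _ = Real.sqrt (2 * π) ^ d * Real.sqrt S.det := by
        rw [hgval, hMdet, Real.sqrt_inv, inv_inv, mul_comm]

include hS in
lemma integrable_gauss_quadratic :
    Integrable (fun x : Fin d → ℝ => Real.exp (-(1 / 2) * (x ⬝ᵥ S⁻¹.mulVec x))) := by
  obtain ⟨M, hMM, hMT, hMdet⟩ := exists_sqrtInv (hS := hS)
  have hdetS : 0 < S.det := hS.det_pos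
  have hdetM : M.det ≠ 0 := by
    intro h
    rw [h, abs_zero] at hMdet
    have : (0:ℝ) < Real.sqrt S.det⁻¹ := Real.sqrt_pos.2 (by positivity)
    exact this.ne' hMdet.symm
  have hquad : ∀ x : Fin d → ℝ, x ⬝ᵥ S⁻¹.mulVec x = (M.mulVec x) ⬝ᵥ (M.mulVec x) := by
    intro x
    rw [← hMM, ← Matrix.mulVec_mulVec, Matrix.dotProduct_mulVec x M, ← Matrix.mulVec_transpose,
      hMT]
  set g : (Fin d → ℝ) → ℝ := fun y => ∏ i, Real.exp (-(1/2) * (y i)^2) with hgdef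
  have hg : ∀ y : Fin d → ℝ, Real.exp (-(1/2) * (y ⬝ᵥ y)) = g y := by
    intro y
    simp only [hgdef, ← Real.exp_sum]
    congr 1
    simp only [dotProduct, Finset.mul_sum]
    exact Finset.sum_congr rfl (fun i _ => by ring)
  have hgcont : Continuous g := by
    apply continuous_finset_prod
    intro i _
    exact (Real.continuous_exp.comp (by fun_prop))
  have hgint : Integrable g := by
    apply Integrable.fintype_prod (f := fun (_ : Fin d) (x : ℝ) => Real.exp (-(1/2) * x^2))
    intro i
    simpa using integrable_exp_neg_mul_sq (by norm_num : (0:ℝ) < 1/2)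
  have hmap : Measure.map (Matrix.toLin' M) volume =
      ENNReal.ofReal |M.det|⁻¹ • volume := by
    have := Real.map_matrix_volume_pi_eq_smul_volume_pi (M := M) hdetM
    rwa [abs_inv] at this
  have hTmeas : Measurable (Matrix.toLin' M) :=
    (Matrix.toLin' M).continuous_of_finiteDimensional.measurable
  have : Integrable (g ∘ ⇑(Matrix.toLin' M)) volume := by
    rw [← MeasureTheory.integrable_map_measure hgcont.aestronglyMeasurable hTmeas.aemeasurable,
      hmap]
    exact hgint.smul_measure ENNReal.ofReal_ne_top
  apply this.congr
  filter_upwards with x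
  rw [hquad x, hg]
  simp [Matrix.toLin'_apply]

include hS in
lemma gaussian_univ : gaussian d 0 S Set.univ = 1 := by
  have hdetS : 0 < S.det := hS.det_pos
  set c : ℝ := (2 * Real.pi) ^ (-(d : ℝ) / 2) * S.det ^ (-(1 : ℝ) / 2) with hc
  have hcpos : 0 < c := by
    apply mul_pos <;> apply Real.rpow_pos_of_pos
    · positivity
    · exact hdetS
  have hρint : Integrable (fun θ : Fin d → ℝ =>
      c * Real.exp (-(1 / 2) * (θ ⬝ᵥ S⁻¹.mulVec θ))) :=
    (integrable_gauss_quadratic hS).const_mul c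
  have hval : ∫ θ : Fin d → ℝ, c * Real.exp (-(1 / 2) * (θ ⬝ᵥ S⁻¹.mulVec θ)) = 1 := by
    rw [MeasureTheory.integral_const_mul, integral_gauss_quadratic hS]
    -- c * (sqrt(2π)^d * sqrt(det S)) = 1
    rw [hc]
    have h2π : (0:ℝ) < 2 * π := by positivity
    have e1 : Real.sqrt (2 * π) ^ d = (2 * π) ^ ((d : ℝ) / 2) := by
      rw [Real.sqrt_eq_rpow, ← Real.rpow_natCast ((2*π) ^ ((1:ℝ)/2)) d,
        ← Real.rpow_mul h2π.le]
      congr 1; ring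
    have e2 : Real.sqrt S.det = S.det ^ ((1:ℝ)/2) := by
      rw [Real.sqrt_eq_rpow]
    rw [e1, e2, mul_mul_mul_comm, ← Real.rpow_add h2π, ← Real.rpow_add hdetS,
      show -(d:ℝ)/2 + (d:ℝ)/2 = 0 by ring, show (-1:ℝ)/2 + 1/2 = 0 by ring,
      Real.rpow_zero, Real.rpow_zero, one_mul]
  rw [gaussian, MeasureTheory.withDensity_apply _ MeasurableSet.univ,
    Measure.restrict_univ]
  have heq : (fun θ : Fin d → ℝ => ENNReal.ofReal
      ((2 * Real.pi) ^ (-(d : ℝ) / 2) * S.det ^ (-(1 : ℝ) / 2) *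
        Real.exp (-(1 / 2) * ((θ - 0) ⬝ᵥ S⁻¹.mulVec (θ - 0))))) =
      fun θ => ENNReal.ofReal (c * Real.exp (-(1 / 2) * (θ ⬝ᵥ S⁻¹.mulVec θ))) := by
    ext θ; rw [sub_zero, hc]
  rw [heq, ← MeasureTheory.ofReal_integral_eq_lintegral_ofReal hρint]
  · rw [hval]; simp
  · filter_upwards with θ
    positivity

include hS in
lemma gaussian_isProb : IsProbabilityMeasure (gaussian d 0 S) :=
  ⟨gaussian_univ hS⟩

end gaussfacts



lemma trace_eq_sum_eigenvalues' {d : ℕ} {S : Matrix (Fin d) (Fin d) ℝ}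
    (hH : S.IsHermitian) : S.trace = ∑ i, hH.eigenvalues i := by
  conv_lhs => rw [hH.spectral_theorem]
  rw [Unitary.conjStarAlgAut_apply, Matrix.trace_mul_cycle]
  have hU : (star hH.eigenvectorUnitary.1) * hH.eigenvectorUnitary.1 = 1 :=
    Unitary.coe_star_mul_self hH.eigenvectorUnitary
  rw [hU, Matrix.one_mul, Matrix.trace_diagonal]
  rfl

lemma DKL_nonneg {d : ℕ} {S : Matrix (Fin d) (Fin d) ℝ} (hPD : S.PosDef) :
    0 ≤ (S - 1).trace - Real.log S.det := by
  have hH : S.IsHermitian := hPD.1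
  have hpos : ∀ i, 0 < hH.eigenvalues i := fun i => hPD.eigenvalues_pos i
  have hdet : S.det = ∏ i, hH.eigenvalues i := by
    rw [hH.det_eq_prod_eigenvalues]
    norm_num
  have hlog : Real.log S.det = ∑ i, Real.log (hH.eigenvalues i) := by
    rw [hdet, Real.log_prod]
    exact fun i _ => (hpos i).ne'
  have htr : (S - 1).trace = ∑ i, (hH.eigenvalues i - 1) := by
    rw [Matrix.trace_sub, Matrix.trace_one, trace_eq_sum_eigenvalues' hH]
    rw [Finset.sum_sub_distrib]
    simp
  rw [htr, hlog, ← Finset.sum_sub_distrib]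
  apply Finset.sum_nonneg
  intro i _
  have := Real.log_le_sub_one_of_pos (hpos i)
  linarith


section Main

variable {Z : Type*} [MeasurableSpace Z]

theorem pretraining_generalization_bound'
    (d N : ℕ) (hd : 1 ≤ d) (hN : 1 ≤ N)
    (𝒟 : Measure Z) [IsProbabilityMeasure 𝒟]
    (ℓ : (Fin d → ℝ) → Z → ℝ) (hℓmeas : Measurable (Function.uncurry ℓ))
    (hℓbound : ∀ θ z, ℓ θ z ∈ Set.Icc (0 : ℝ) 1)
    (Q : Measure (Fin d → ℝ)) [IsProbabilityMeasure Q]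
    (DD : ℝ) (hDD0 : 0 ≤ DD)
    (δ : ℝ) (hδ : δ ∈ Set.Ioo (0 : ℝ) 1) :
    (Measure.pi fun _ : Fin N => 𝒟)
      {S : Fin N → Z |
        ∫ θ, ∫ z, ℓ θ z ∂𝒟 ∂Q ≤
          (∫ θ, (1 / (N : ℝ)) * ∑ i : Fin N, ℓ θ (S i) ∂Q) +
            Real.sqrt
              ((DD + 2 * Real.log (1 / δ) +
                  2 * Real.log N + 4) / (4 * N - 2))}
      ≥ ENNReal.ofReal (1 - δ) := by
  obtain ⟨hδ0, hδ1⟩ := hδ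
  have hN1 : (1:ℝ) ≤ (N:ℝ) := by exact_mod_cast hN
  have hℓ0 : ∀ θ z, 0 ≤ ℓ θ z := fun θ z => (hℓbound θ z).1
  have hℓ1 : ∀ θ z, ℓ θ z ≤ 1 := fun θ z => (hℓbound θ z).2
  -- the per-sample expected loss
  set F : Z → ℝ := fun z => ∫ θ, ℓ θ z ∂Q with hF
  have hFmeas : Measurable F := by
    have h1 : StronglyMeasurable (Function.uncurry ℓ) := hℓmeas.stronglyMeasurable
    exact (h1.integral_prod_left' (μ := Q)).measurable
  have hint_z : ∀ z, Integrable (fun θ => ℓ θ z) Q := by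
    intro z
    refine Integrable.mono' (integrable_const 1)
      (hℓmeas.comp (measurable_id.prodMk measurable_const)).aestronglyMeasurable ?_
    filter_upwards with θ
    rw [Real.norm_eq_abs, abs_of_nonneg (hℓ0 θ z)]
    exact hℓ1 θ z
  have hF0 : ∀ z, 0 ≤ F z := fun z => integral_nonneg (fun θ => hℓ0 θ z)
  have hF1 : ∀ z, F z ≤ 1 := by
    intro z
    calc F z ≤ ∫ _, (1:ℝ) ∂Q :=
        integral_mono (hint_z z) (integrable_const 1) (fun θ => hℓ1 θ z)
      _ = 1 := by simp
  set pm : ℝ := ∫ z, F z ∂𝒟 with hpm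
  have hpm0 : 0 ≤ pm := integral_nonneg fun z => hF0 z
  have hFint : Integrable F 𝒟 := by
    refine Integrable.mono' (integrable_const 1) hFmeas.aestronglyMeasurable ?_
    filter_upwards with z
    rw [Real.norm_eq_abs, abs_of_nonneg (hF0 z)]
    exact hF1 z
  have hpm1 : pm ≤ 1 := by
    calc pm ≤ ∫ _, (1:ℝ) ∂𝒟 := integral_mono hFint (integrable_const 1) hF1
      _ = 1 := by simp
  -- Fubini
  have hunc_int : Integrable (Function.uncurry ℓ) (Q.prod 𝒟) := by
    refine Integrable.mono' (integrable_const 1) hℓmeas.aestronglyMeasurable ?_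
    filter_upwards with p
    rcases p with ⟨θ, z⟩
    simp only [Function.uncurry_apply_pair]
    rw [Real.norm_eq_abs, abs_of_nonneg (hℓ0 θ z)]
    exact hℓ1 θ z
  have hswap : ∫ θ, ∫ z, ℓ θ z ∂𝒟 ∂Q = pm :=
    MeasureTheory.integral_integral_swap hunc_int
  -- the deviation
  have hlogδ : 0 < Real.log (1/δ) := by
    rw [one_div, Real.log_inv]
    exact neg_pos.2 (Real.log_neg hδ0 hδ1)
  have hlogN : 0 ≤ Real.log N := Real.log_nonneg hN1
  set A : ℝ := DD + 2 * Real.log (1/δ) + 2 * Real.log N + 4 with hA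
  have hA0 : 0 < A := by rw [hA]; linarith
  have hden : (0:ℝ) < 4 * N - 2 := by linarith
  set t : ℝ := Real.sqrt (A / (4 * N - 2)) with ht
  have ht0 : 0 ≤ t := Real.sqrt_nonneg _
  have ht2 : t^2 = A / (4*N-2) := Real.sq_sqrt (by positivity)
  -- the product measure
  letI : MeasureSpace Z := ⟨𝒟⟩
  set P : Measure (Fin N → Z) := Measure.pi fun _ : Fin N => 𝒟 with hP
  haveI : IsProbabilityMeasure P := by
    rw [hP]; infer_instance
  have hPvol : P = (volume : Measure (Fin N → Z)) := rfl
  set X : (Fin N → Z) → ℝ := fun S => ∑ i, F (S i) with hX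
  have hXmeas : Measurable X :=
    Finset.measurable_sum _ (fun i _ => hFmeas.comp (measurable_pi_apply i))
  -- pointwise convexity bound
  have hptwise : ∀ z, Real.exp (-(4*t) * F z) ≤ 1 - F z + F z * Real.exp (-(4*t)) := by
    intro z
    have hx0 := hF0 z
    have hx1 := hF1 z
    have hcvx := convexOn_exp.2 (Set.mem_univ (0:ℝ)) (Set.mem_univ (-(4*t)))
      (by linarith : (0:ℝ) ≤ 1 - F z) hx0 (by ring)
    simp only [smul_eq_mul, mul_zero, zero_add, Real.exp_zero, mul_one] at hcvx
    calc Real.exp (-(4*t) * F z) = Real.exp (F z * -(4*t)) := by rw [mul_comm]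
      _ ≤ 1 - F z + F z * Real.exp (-(4*t)) := hcvx
  -- per-sample mgf bound
  have hexpmeas : Measurable (fun z => Real.exp (-(4*t) * F z)) :=
    Real.measurable_exp.comp (hFmeas.const_mul _)
  have hexpFint : Integrable (fun z => Real.exp (-(4*t) * F z)) 𝒟 := by
    refine Integrable.mono' (integrable_const 1) hexpmeas.aestronglyMeasurable ?_
    filter_upwards with z
    rw [Real.norm_eq_abs, abs_of_nonneg (Real.exp_pos _).le, Real.exp_le_one_iff]
    have := hF0 z
    nlinarith
  have hEbound : ∫ z, Real.exp (-(4*t) * F z) ∂𝒟 ≤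
      Real.exp (-(4*t*pm) + (4*t)^2/8) := by
    calc ∫ z, Real.exp (-(4*t) * F z) ∂𝒟
        ≤ ∫ z, (1 - F z + F z * Real.exp (-(4*t))) ∂𝒟 := by
          refine integral_mono hexpFint ?_ hptwise
          exact (((integrable_const 1).sub hFint).add (hFint.mul_const _))
      _ = 1 - pm + pm * Real.exp (-(4*t)) := by
          have hsubint : Integrable (fun z => 1 - F z) 𝒟 := by
            exact (integrable_const 1).sub hFint
          rw [integral_add hsubint (hFint.mul_const _),
            integral_sub (integrable_const 1) hFint, integral_mul_const]
          simp [hpm]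
      _ ≤ Real.exp (-(4*t*pm) + (4*t)^2/8) :=
          hoeffding_scalar hpm0 hpm1 (by positivity)
  have hEnn : 0 ≤ ∫ z, Real.exp (-(4*t) * F z) ∂𝒟 :=
    integral_nonneg fun z => (Real.exp_pos _).le
  -- mgf of the sum under the product measure
  have hXint : Integrable (fun S => Real.exp (-(4*t) * X S)) P := by
    have hprod : Integrable
        (fun S : Fin N → Z => ∏ i : Fin N, Real.exp (-(4*t) * F (S i))) volume :=
      Integrable.fintype_prod (f := fun (_ : Fin N) (z : Z) => Real.exp (-(4*t) * F z))
        (fun _ => hexpFint)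
    rw [hPvol]
    apply hprod.congr
    filter_upwards with S
    rw [← Real.exp_sum]
    congr 1
    rw [hX, Finset.mul_sum]
  have hmgf : ∫ S, Real.exp (-(4*t) * X S) ∂P =
      (∫ z, Real.exp (-(4*t) * F z) ∂𝒟)^N := by
    calc ∫ S, Real.exp (-(4*t) * X S) ∂P
        = ∫ S : Fin N → Z, ∏ i : Fin N, Real.exp (-(4*t) * F (S i)) ∂P := by
          congr 1
          ext S
          rw [← Real.exp_sum]
          congr 1
          rw [hX, Finset.mul_sum]
      _ = (∫ z, Real.exp (-(4*t) * F z) ∂𝒟)^N := by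
          rw [hPvol, MeasureTheory.volume_pi]
          rw [MeasureTheory.integral_fintype_prod_eq_pow (ι := Fin N)
            (f := fun z : Z => Real.exp (-(4*t) * F z))]
          simp only [Fintype.card_fin]
          rfl
  -- Chernoff bound
  set bad : Set (Fin N → Z) := {S | X S ≤ ↑N * (pm - t)} with hbad
  have hbadmeas : MeasurableSet bad := measurableSet_le hXmeas measurable_const
  have hcher := ProbabilityTheory.measure_le_le_exp_mul_mgf (X := X) (μ := P)
    (t := -(4*t)) (↑N * (pm - t)) (by linarith) hXint
  have hchain : (P bad).toReal ≤ δ := by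
    have hmgf' : ProbabilityTheory.mgf X P (-(4*t)) =
        (∫ z, Real.exp (-(4*t) * F z) ∂𝒟)^N := hmgf
    rw [hmgf'] at hcher
    calc (P bad).toReal
        ≤ Real.exp (-(-(4*t)) * (↑N * (pm - t))) *
            (∫ z, Real.exp (-(4*t) * F z) ∂𝒟)^N := hcher
      _ ≤ Real.exp (-(-(4*t)) * (↑N * (pm - t))) *
            (Real.exp (-(4*t*pm) + (4*t)^2/8))^N := by
          exact mul_le_mul_of_nonneg_left (pow_le_pow_left₀ hEnn hEbound N)
            (Real.exp_pos _).le
      _ = Real.exp (-(2*↑N*t^2)) := by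
          rw [← Real.exp_nat_mul, ← Real.exp_add]
          congr 1
          ring
      _ ≤ δ := by
          rw [← Real.exp_log hδ0]
          apply Real.exp_le_exp.2
          rw [ht2]
          have hkey : Real.log (1/δ) * (4*↑N - 2) ≤ 2*↑N*A := by
            have h1 : 2 * Real.log (1/δ) ≤ A := by rw [hA]; linarith
            nlinarith
          have hlogeq : Real.log δ = - Real.log (1/δ) := by
            rw [one_div, Real.log_inv, neg_neg]
          have h3 : Real.log (1/δ) ≤ 2*↑N*(A/(4*↑N-2)) := by
            rw [← mul_div_assoc, le_div_iff₀ hden]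
            linarith [hkey]
          linarith [h3]
  -- conclude
  have hPbad : P bad ≤ ENNReal.ofReal δ := by
    rw [← ENNReal.ofReal_toReal (measure_ne_top P bad)]
    exact ENNReal.ofReal_le_ofReal hchain
  have hsub : badᶜ ⊆ {S : Fin N → Z | ∫ θ, ∫ z, ℓ θ z ∂𝒟 ∂Q ≤
      (∫ θ, (1/(N:ℝ)) * ∑ i : Fin N, ℓ θ (S i) ∂Q) + t} := by
    intro S hS
    simp only [Set.mem_compl_iff, hbad, Set.mem_setOf_eq, not_le] at hS
    simp only [Set.mem_setOf_eq]
    have hR : ∫ θ, (1/(N:ℝ)) * ∑ i : Fin N, ℓ θ (S i) ∂Q = (1/(N:ℝ)) * X S := by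
      rw [MeasureTheory.integral_const_mul, integral_finset_sum _ (fun i _ => hint_z (S i))]
    rw [hswap, hR]
    have hNpos : (0:ℝ) < N := by linarith
    have h2 : pm - t < (1/(N:ℝ)) * X S := by
      rw [one_div, inv_mul_eq_div, lt_div_iff₀ hNpos]
      linarith [hS]
    linarith
  rw [ge_iff_le, show ENNReal.ofReal (1-δ) = 1 - ENNReal.ofReal δ by
    rw [ENNReal.ofReal_sub _ hδ0.le, ENNReal.ofReal_one]]
  calc 1 - ENNReal.ofReal δ ≤ 1 - P bad := tsub_le_tsub_left hPbad 1
    _ = P badᶜ := (prob_compl_eq_one_sub hbadmeas).symm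
    _ ≤ P _ := measure_mono hsub

end Main


/-- PAC-Bayesian generalization bound for the pre-training stage (Theorem 1):
prior `P = N(0, I)`, posterior `Q = N(0, Σ_PT)`,
`D(Q,P) = tr(Σ_PT − I) − log det Σ_PT`. -/
theorem pretraining_generalization_bound
    (d N : ℕ) (hd : 1 ≤ d) (hN : 1 ≤ N)
    {Z : Type*} [MeasurableSpace Z] (𝒟 : Measure Z) [IsProbabilityMeasure 𝒟]
    (ℓ : (Fin d → ℝ) → Z → ℝ) (hℓmeas : Measurable (Function.uncurry ℓ))
    (hℓbound : ∀ θ z, ℓ θ z ∈ Set.Icc (0 : ℝ) 1)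
    (SigPT : Matrix (Fin d) (Fin d) ℝ) (hSigSym : SigPT.IsSymm) (hSigPD : SigPT.PosDef)
    (δ : ℝ) (hδ : δ ∈ Set.Ioo (0 : ℝ) 1) :
    (Measure.pi fun _ : Fin N => 𝒟)
      {S : Fin N → Z |
        ∫ θ, ∫ z, ℓ θ z ∂𝒟 ∂(gaussian d 0 SigPT) ≤
          (∫ θ, (1 / (N : ℝ)) * ∑ i : Fin N, ℓ θ (S i) ∂(gaussian d 0 SigPT)) +
            Real.sqrt
              ((((SigPT - 1).trace - Real.log SigPT.det) + 2 * Real.log (1 / δ) +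
                  2 * Real.log N + 4) / (4 * N - 2))}
      ≥ ENNReal.ofReal (1 - δ) := by
  haveI : IsProbabilityMeasure (gaussian d 0 SigPT) := gaussian_isProb (hS := hSigPD)
  exact pretraining_generalization_bound' d N hd hN 𝒟 ℓ hℓmeas hℓbound
    (gaussian d 0 SigPT) ((SigPT - 1).trace - Real.log SigPT.det)
    (DKL_nonneg hSigPD) δ hδ
end

section
/- Let d, N ≥ 1 be integers, let Z be a measurable space with probability measure 𝒟, and let ℓ : ℝ^d × Z → [0,1] be measurable. Let the prior be Q_PT = N(0, Σ_PT) and the posterior be Q_FT = N(θ_FT, Σ_FT) on ℝ^d, where Σ_PT and Σ_FT are symmetric positive definite d×d real matrices and θ_FT ∈ ℝ^d. Then for every δ ∈ (0,1), with probability at least 1 − δ over an i.i.d. sample S = (z_1, …, z_N) drawn from 𝒟^N, the expected risk R(Q_FT) = E_{θ∼Q_FT} E_{z∼𝒟}[ℓ(θ,z)] satisfies R(Q_FT) ≤ R̂_S(Q_FT) + sqrt( (D(Q_FT, Q_PT) + 2 log(1/δ) + 2 log N + 4) / (4N − 2) ), where R̂_S(Q_FT) = E_{θ∼Q_FT}[(1/N)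 Σ_{i=1}^N ℓ(θ, z_i)] and D(Q_FT, Q_PT) = log( det(Σ_PT) / det(Σ_FT) ) + tr(Σ_PT⁻¹ Σ_FT − I) + θ_FTᵀ Σ_PT⁻¹ θ_FT. -/
open MeasureTheory Matrix

open Real ProbabilityTheory



lemma hoeffding_core (p : ℝ) (hp0 : 0 ≤ p) (hp1 : p ≤ 1) (t : ℝ) :
    Real.log (1 - p + p * Real.exp t) ≤ t * p + t ^ 2 / 8 := by
  set F : ℝ → ℝ := fun x => 1 - p + p * Real.exp x with hF
  have hFpos : ∀ x, 0 < F x := by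
    intro x
    rcases eq_or_lt_of_le hp1 with h | h
    · simp [hF, h, Real.exp_pos]
    · have : 0 < 1 - p := by linarith
      have : 0 ≤ p * Real.exp x := mul_nonneg hp0 (Real.exp_pos x).le
      simp only [hF]; linarith
  have hFd : ∀ x, HasDerivAt F (p * Real.exp x) x := by
    intro x
    exact ((Real.hasDerivAt_exp x).const_mul p).const_add (1 - p)
  set h : ℝ → ℝ := fun x => x * p + x ^ 2 / 8 - Real.log (F x) with hh
  set h1 : ℝ → ℝ := fun x => p + x / 4 - p * Real.exp x / F x with hh1
  have hhd : ∀ x, HasDerivAt h (h1 x) x := by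
    intro x
    have d1 : HasDerivAt (fun x : ℝ => x * p + x ^ 2 / 8) (p + x / 4) x := by
      have := ((hasDerivAt_id x).mul_const p).add ((hasDerivAt_pow 2 x).div_const 8)
      exact this.congr_deriv (by push_cast; ring)
    have d2 : HasDerivAt (fun x => Real.log (F x)) (p * Real.exp x / F x) x :=
      (hFd x).log (hFpos x).ne'
    exact d1.sub d2
  have hh1d : ∀ x, HasDerivAt h1
      (1 / 4 - (p * Real.exp x * F x - p * Real.exp x * (p * Real.exp x)) / (F x) ^ 2) x := by
    intro x
    have d1 : HasDerivAt (fun x : ℝ => p + x / 4) (1 / 4) x := by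
      simpa using ((hasDerivAt_id x).div_const 4).const_add p
    have d2 : HasDerivAt (fun x => p * Real.exp x / F x)
        ((p * Real.exp x * F x - p * Real.exp x * (p * Real.exp x)) / (F x) ^ 2) x := by
      exact ((Real.hasDerivAt_exp x).const_mul p).div (hFd x) (hFpos x).ne'
    exact d1.sub d2
  have hderiv_nonneg : ∀ x, 0 ≤ 1 / 4 -
      (p * Real.exp x * F x - p * Real.exp x * (p * Real.exp x)) / (F x) ^ 2 := by
    intro x
    have hFx := hFpos x
    set q : ℝ := p * Real.exp x / F x with hq
    have hkey : (p * Real.exp x * F x - p * Real.exp x * (p * Real.exp x)) / (F x) ^ 2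
        = q - q ^ 2 := by
      rw [hq]
      field_simp
    rw [hkey]
    nlinarith [sq_nonneg (q - 1 / 2)]
  have h1mono : Monotone h1 :=
    monotone_of_deriv_nonneg (fun x => (hh1d x).differentiableAt)
      (fun x => by rw [(hh1d x).deriv]; exact hderiv_nonneg x)
  have h10 : h1 0 = 0 := by simp [hh1, hF]
  have h0 : h 0 = 0 := by simp [hh, hF]
  have hhub : 0 ≤ h t := by
    rcases le_total 0 t with ht | ht
    · have := monotoneOn_of_deriv_nonneg (convex_Ici 0)
        (Continuous.continuousOn (by
          fun_prop (disch := exact fun x => (hFpos x).ne')) :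
          ContinuousOn h (Set.Ici 0))
        (fun x _ => (hhd x).differentiableAt.differentiableWithinAt)
        (fun x hx => by
          rw [(hhd x).deriv]
          have : (0:ℝ) ≤ x := le_of_lt (by simpa using hx)
          calc (0:ℝ) = h1 0 := h10.symm
          _ ≤ h1 x := h1mono this)
        (Set.self_mem_Ici) (Set.mem_Ici.2 ht) ht
      linarith [h0 ▸ this]
    · have := antitoneOn_of_deriv_nonpos (convex_Iic 0)
        (Continuous.continuousOn (by
          fun_prop (disch := exact fun x => (hFpos x).ne')) :
          ContinuousOn h (Set.Iic 0))
        (fun x _ => (hhd x).differentiableAt.differentiableWithinAt)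
        (fun x hx => by
          rw [(hhd x).deriv]
          have hx0 : x ≤ (0:ℝ) := le_of_lt (by simpa using hx)
          calc h1 x ≤ h1 0 := h1mono hx0
          _ = 0 := h10)
        (Set.mem_Iic.2 ht) (Set.self_mem_Iic) ht
      linarith [h0 ▸ this]
  have := hhub
  simp only [hh] at this
  linarith



lemma integrable_of_bound {Z : Type*} [MeasurableSpace Z] (μ : Measure Z) [IsFiniteMeasure μ]
    (f : Z → ℝ) (hf : AEStronglyMeasurable f μ) (C : ℝ) (h : ∀ z, |f z| ≤ C) :
    Integrable f μ :=
  Integrable.mono' (integrable_const C) hf (Filter.Eventually.of_forall fun z => by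
    simpa using h z)

lemma hoeffding_mgf {Z : Type*} [MeasurableSpace Z] (𝒟 : Measure Z) [IsProbabilityMeasure 𝒟]
    (Y : Z → ℝ) (hY : Measurable Y) (a : ℝ) (hmem : ∀ z, Y z ∈ Set.Icc a (a + 1))
    (hmean : ∫ z, Y z ∂𝒟 = 0) (t : ℝ) :
    ∫ z, Real.exp (t * Y z) ∂𝒟 ≤ Real.exp (t ^ 2 / 8) := by
  have hYabs : ∀ z, |Y z| ≤ |a| + 1 := by
    intro z
    rcases hmem z with ⟨h1, h2⟩
    rw [abs_le]
    constructor <;> [skip; skip] <;> cases abs_cases a <;> linarith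
  have hIntY : Integrable Y 𝒟 :=
    integrable_of_bound 𝒟 Y hY.aestronglyMeasurable (|a| + 1) hYabs
  have ha0 : a ≤ 0 := by
    have : ∫ _ : Z, a ∂𝒟 ≤ ∫ z, Y z ∂𝒟 :=
      integral_mono (integrable_const a) hIntY fun z => (hmem z).1
    simpa [hmean] using this
  have ha1 : 0 ≤ a + 1 := by
    have : ∫ z, Y z ∂𝒟 ≤ ∫ _ : Z, (a + 1) ∂𝒟 :=
      integral_mono hIntY (integrable_const _) fun z => (hmem z).2
    simpa [hmean] using this
  set c1 := Real.exp (t * a)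
  set c2 := Real.exp (t * (a + 1))
  have hpt : ∀ z, Real.exp (t * Y z) ≤ (c2 - c1) * Y z + ((a + 1) * c1 - a * c2) := by
    intro z
    rcases hmem z with ⟨h1, h2⟩
    have hconv := convexOn_exp.2 (Set.mem_univ (t * a)) (Set.mem_univ (t * (a + 1)))
      (by linarith : (0:ℝ) ≤ a + 1 - Y z) (by linarith : (0:ℝ) ≤ Y z - a)
      (by ring : (a + 1 - Y z) + (Y z - a) = 1)
    have harg : (a + 1 - Y z) • (t * a) + (Y z - a) • (t * (a + 1)) = t * Y z := by
      simp only [smul_eq_mul]; ring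
    rw [harg] at hconv
    calc Real.exp (t * Y z) ≤ (a + 1 - Y z) • c1 + (Y z - a) • c2 := hconv
    _ = (c2 - c1) * Y z + ((a + 1) * c1 - a * c2) := by simp only [smul_eq_mul]; ring
  have hIntL : Integrable (fun z => Real.exp (t * Y z)) 𝒟 := by
    refine integrable_of_bound 𝒟 _ ((hY.const_mul t).exp).aestronglyMeasurable
      (Real.exp (|t| * (|a| + 1))) fun z => ?_
    rw [abs_of_pos (Real.exp_pos _)]
    apply Real.exp_le_exp.2
    calc t * Y z ≤ |t * Y z| := le_abs_self _
    _ = |t| * |Y z| := abs_mul _ _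
    _ ≤ |t| * (|a| + 1) := by
        exact mul_le_mul_of_nonneg_left (hYabs z) (abs_nonneg t)
  have hIntR : Integrable (fun z => (c2 - c1) * Y z + ((a + 1) * c1 - a * c2)) 𝒟 :=
    (hIntY.const_mul _).add (integrable_const _)
  have hstep : ∫ z, Real.exp (t * Y z) ∂𝒟 ≤ (a + 1) * c1 - a * c2 := by
    calc ∫ z, Real.exp (t * Y z) ∂𝒟
        ≤ ∫ z, ((c2 - c1) * Y z + ((a + 1) * c1 - a * c2)) ∂𝒟 :=
          integral_mono hIntL hIntR hpt
    _ = (c2 - c1) * ∫ z, Y z ∂𝒟 + ((a + 1) * c1 - a * c2) := by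
        rw [integral_add (hIntY.const_mul _) (integrable_const _), integral_const_mul,
          integral_const]
        simp
    _ = (a + 1) * c1 - a * c2 := by rw [hmean]; ring
  set p : ℝ := -a with hp
  have hform : (a + 1) * c1 - a * c2 = c1 * (1 - p + p * Real.exp t) := by
    simp only [c1, c2, hp]
    rw [show t * (a + 1) = t * a + t by ring, Real.exp_add]
    ring
  have hFpos : 0 < 1 - p + p * Real.exp t := by
    rcases eq_or_lt_of_le (by linarith : p ≤ 1) with h | h
    · rw [h]; simpa using Real.exp_pos t
    · nlinarith [Real.exp_pos t, (by linarith : (0:ℝ) ≤ p)]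
  have hcore := hoeffding_core p (by linarith) (by linarith) t
  have hle : 1 - p + p * Real.exp t ≤ Real.exp (t * p + t ^ 2 / 8) := by
    have := Real.exp_le_exp.2 hcore
    rwa [Real.exp_log hFpos] at this
  calc ∫ z, Real.exp (t * Y z) ∂𝒟 ≤ (a + 1) * c1 - a * c2 := hstep
  _ = c1 * (1 - p + p * Real.exp t) := hform
  _ ≤ c1 * Real.exp (t * p + t ^ 2 / 8) :=
      mul_le_mul_of_nonneg_left hle (Real.exp_pos _).le
  _ = Real.exp (t ^ 2 / 8) := by
      simp only [c1, ← Real.exp_add, hp]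
      ring_nf



lemma hoeffding_pi {Z : Type*} [MeasurableSpace Z] (𝒟 : Measure Z) [IsProbabilityMeasure 𝒟]
    (N : ℕ) (g : Z → ℝ) (hg : Measurable g) (hmem : ∀ z, g z ∈ Set.Icc (0:ℝ) 1)
    (ε : ℝ) (hε : 0 ≤ ε) :
    (Measure.pi fun _ : Fin N => 𝒟) {S | (N:ℝ) * ε ≤ ∑ i, ((∫ z, g z ∂𝒟) - g (S i))}
      ≤ ENNReal.ofReal (Real.exp (-(2 * N * ε ^ 2))) := by
  set μbar := ∫ z, g z ∂𝒟 with hμbar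
  have hgInt : Integrable g 𝒟 :=
    integrable_of_bound 𝒟 g hg.aestronglyMeasurable 1 fun z => by
      rcases hmem z with ⟨h1, h2⟩; rw [abs_le]; constructor <;> linarith
  have hμ0 : 0 ≤ μbar := integral_nonneg fun z => (hmem z).1
  have hμ1 : μbar ≤ 1 := by
    have : ∫ z, g z ∂𝒟 ≤ ∫ _ : Z, (1:ℝ) ∂𝒟 :=
      integral_mono hgInt (integrable_const _) fun z => (hmem z).2
    simpa using this
  set Y : Z → ℝ := fun z => μbar - g z with hYdef
  have hYmeas : Measurable Y := measurable_const.sub hg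
  have hYmem : ∀ z, Y z ∈ Set.Icc (μbar - 1) ((μbar - 1) + 1) := by
    intro z; rcases hmem z with ⟨h1, h2⟩
    constructor <;> simp only [hYdef] <;> linarith
  have hYmean : ∫ z, Y z ∂𝒟 = 0 := by
    rw [integral_sub (integrable_const _) hgInt]
    simp [hμbar]
  have hYabs : ∀ z, |Y z| ≤ 1 := by
    intro z; rcases hmem z with ⟨h1, h2⟩
    rw [abs_le]; constructor <;> simp only [hYdef] <;> linarith
  set PP := Measure.pi fun _ : Fin N => 𝒟 with hPP
  haveI : IsProbabilityMeasure PP := by rw [hPP]; infer_instance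
  set X : (Fin N → Z) → ℝ := fun S => ∑ i, Y (S i) with hXdef
  have hXmeas : Measurable X :=
    Finset.measurable_sum _ fun i _ => hYmeas.comp (measurable_pi_apply i)
  set t : ℝ := 4 * ε with ht
  have htpos : 0 ≤ t := by positivity
  have hXbd : ∀ S, |X S| ≤ N := fun S => by
    calc |X S| ≤ ∑ i, |Y (S i)| := Finset.abs_sum_le_sum_abs _ _
    _ ≤ ∑ _i : Fin N, (1:ℝ) := Finset.sum_le_sum fun i _ => hYabs (S i)
    _ = N := by simp
  have h_int : Integrable (fun ω => Real.exp (t * X ω)) PP := by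
    refine integrable_of_bound PP _ ((hXmeas.const_mul t).exp).aestronglyMeasurable
      (Real.exp (t * N)) fun S => ?_
    rw [abs_of_pos (Real.exp_pos _)]
    apply Real.exp_le_exp.2
    calc t * X S ≤ t * |X S| := by
          exact mul_le_mul_of_nonneg_left (le_abs_self _) htpos
    _ ≤ t * N := mul_le_mul_of_nonneg_left (hXbd S) htpos
  have hchern := ProbabilityTheory.measure_ge_le_exp_mul_mgf (X := X) (μ := PP)
    ((N:ℝ) * ε) htpos h_int
  -- compute the mgf as a product
  letI : MeasureSpace Z := ⟨𝒟⟩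
  haveI : SigmaFinite (volume : Measure Z) := inferInstanceAs (SigmaFinite 𝒟)
  have hprod : mgf X PP t = (∫ z, Real.exp (t * Y z) ∂𝒟) ^ N := by
    have h1 : mgf X PP t = ∫ S : Fin N → Z, ∏ i, Real.exp (t * Y (S i)) ∂PP := by
      unfold mgf
      congr 1
      ext S
      simp only [hXdef, Finset.mul_sum, Real.exp_sum]
    rw [h1]
    have h2 := MeasureTheory.integral_fintype_prod_eq_pow (ι := Fin N) (μ := 𝒟)
      (fun z => Real.exp (t * Y z))
    simpa [MeasureTheory.volume_pi, Fintype.card_fin] using h2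
  have hmgf_le : mgf X PP t ≤ Real.exp ((N:ℝ) * t ^ 2 / 8) := by
    rw [hprod]
    have hbase := hoeffding_mgf 𝒟 Y hYmeas (μbar - 1) hYmem hYmean t
    have hbase0 : 0 ≤ ∫ z, Real.exp (t * Y z) ∂𝒟 :=
      integral_nonneg fun z => (Real.exp_pos _).le
    calc (∫ z, Real.exp (t * Y z) ∂𝒟) ^ N ≤ (Real.exp (t ^ 2 / 8)) ^ N :=
          pow_le_pow_left₀ hbase0 hbase N
    _ = Real.exp ((N:ℝ) * t ^ 2 / 8) := by
        rw [← Real.exp_nat_mul]; ring_nf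
  have hfinal : (PP {S | (N:ℝ) * ε ≤ X S}).toReal ≤ Real.exp (-(2 * N * ε ^ 2)) := by
    calc (PP {S | (N:ℝ) * ε ≤ X S}).toReal ≤ Real.exp (-t * ((N:ℝ) * ε)) * mgf X PP t := hchern
    _ ≤ Real.exp (-t * ((N:ℝ) * ε)) * Real.exp ((N:ℝ) * t ^ 2 / 8) :=
        mul_le_mul_of_nonneg_left hmgf_le (Real.exp_pos _).le
    _ = Real.exp (-(2 * N * ε ^ 2)) := by
        rw [← Real.exp_add]; congr 1; rw [ht]; ring
  have hne : PP {S | (N:ℝ) * ε ≤ X S} ≠ ⊤ := measure_ne_top _ _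
  have := (ENNReal.le_ofReal_iff_toReal_le hne (Real.exp_pos _).le).2 hfinal
  exact this




section gauss

variable {d : ℕ} {S : Matrix (Fin d) (Fin d) ℝ}

open scoped MatrixOrder in
lemma quad_integral (hS : S.PosDef) :
    (Integrable (fun x : Fin d → ℝ => Real.exp (-(1/2) * (x ⬝ᵥ S⁻¹.mulVec x))) volume) ∧
    ∫ x : Fin d → ℝ, Real.exp (-(1/2) * (x ⬝ᵥ S⁻¹.mulVec x)) =
      (Real.sqrt (S.det⁻¹))⁻¹ * (Real.sqrt (2 * Real.pi)) ^ d := by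
  classical
  set A := S⁻¹ with hAdef
  have hA : A.PosDef := hS.inv
  have hApsd : A.PosSemidef := hA.posSemidef
  set B := CFC.sqrt A with hBdef
  have hBB : B * B = A := CFC.sqrt_mul_sqrt_self A hApsd.nonneg
  have hBpsd : B.PosSemidef := (CFC.sqrt_nonneg A).posSemidef
  have hBsymm : Bᵀ = B := by
    have := hBpsd.1
    rwa [Matrix.IsHermitian, Matrix.conjTranspose_eq_transpose_of_trivial] at this
  have hdetA : 0 < A.det := hA.det_pos
  have hdetBB : B.det * B.det = A.det := by rw [← Matrix.det_mul, hBB]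
  have hdetB_nonneg : 0 ≤ B.det := by
    rw [hBpsd.1.det_eq_prod_eigenvalues]
    apply Finset.prod_nonneg
    intro i _
    simpa using hBpsd.eigenvalues_nonneg i
  have hdetB_pos : 0 < B.det := by
    rcases eq_or_lt_of_le hdetB_nonneg with h | h
    · exfalso; rw [← h] at hdetBB; simp at hdetBB; linarith
    · exact h
  have hsqrtA : Real.sqrt A.det = B.det := by
    rw [← hdetBB]; exact Real.sqrt_mul_self hdetB_nonneg
  -- quadratic form identity
  have hquad : ∀ x : Fin d → ℝ, x ⬝ᵥ A.mulVec x = (B.mulVec x) ⬝ᵥ (B.mulVec x) := by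
    intro x
    rw [← hBB, ← Matrix.mulVec_mulVec, dotProduct_mulVec]
    congr 1
    conv_lhs => rw [← hBsymm]
    rw [Matrix.vecMul_transpose]
  -- the standard gaussian on ℝ^d
  set g : (Fin d → ℝ) → ℝ := fun y => Real.exp (-(1/2) * (y ⬝ᵥ y)) with hgdef
  have hgprod : ∀ y, g y = ∏ i, Real.exp (-(1/2) * (y i) ^ 2) := by
    intro y
    rw [hgdef]
    simp only [dotProduct, ← Real.exp_sum]
    congr 1
    rw [Finset.mul_sum]
    congr 1; ext i; ring
  have h1d : Integrable (fun x : ℝ => Real.exp (-(1/2) * x ^ 2)) volume := by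
    have := integrable_exp_neg_mul_sq (by norm_num : (0:ℝ) < 1/2)
    convert this using 2 with x
  have hgcont : Continuous g := by
    apply Real.continuous_exp.comp
    apply Continuous.mul continuous_const
    unfold dotProduct
    fun_prop
  have hgint : Integrable g volume := by
    have := MeasureTheory.Integrable.fintype_prod (𝕜 := ℝ) (ι := Fin d)
      (f := fun _ x => Real.exp (-(1/2) * x ^ 2)) (fun _ => h1d)
    have heq : (fun x : Fin d → ℝ => ∏ i, Real.exp (-(1/2) * (x i) ^ 2)) = g := by
      ext y; rw [hgprod y]
    rw [MeasureTheory.volume_pi]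
    rwa [heq] at this
  have hgstd : ∫ y : Fin d → ℝ, g y = (Real.sqrt (2 * Real.pi)) ^ d := by
    have h2 := MeasureTheory.integral_fintype_prod_eq_pow (ι := Fin d) (μ := volume)
      (fun x : ℝ => Real.exp (-(1/2) * x ^ 2))
    have h3 : ∫ x : ℝ, Real.exp (-(1/2) * x ^ 2) = Real.sqrt (2 * Real.pi) := by
      have := integral_gaussian (1/2)
      have harg : ∀ x : ℝ, Real.exp (-(1/2) * x ^ 2) = Real.exp (-(1/2 : ℝ) * x ^ 2) :=
        fun x => rfl
      rw [show Real.pi / (1/2) = 2 * Real.pi by ring] at this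
      convert this using 3 with x
    calc ∫ y : Fin d → ℝ, g y = ∫ y : Fin d → ℝ, ∏ i, Real.exp (-(1/2) * (y i) ^ 2) := by
          congr 1; ext y; exact hgprod y
    _ = (∫ x : ℝ, Real.exp (-(1/2) * x ^ 2)) ^ (Fintype.card (Fin d)) := by
          rw [← h2, MeasureTheory.volume_pi]
    _ = (Real.sqrt (2 * Real.pi)) ^ d := by rw [h3, Fintype.card_fin]
  -- change of variables
  set T : (Fin d → ℝ) →ₗ[ℝ] (Fin d → ℝ) := Matrix.toLin' B with hTdef
  have hTcont : Continuous T := LinearMap.continuous_on_pi T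
  have hmap : Measure.map T volume = ENNReal.ofReal |B.det⁻¹| • volume := by
    exact Real.map_matrix_volume_pi_eq_smul_volume_pi hdetB_pos.ne'
  have hcomp : ∀ x, Real.exp (-(1/2) * (x ⬝ᵥ A.mulVec x)) = g (T x) := by
    intro x
    rw [hgdef, hquad x]
    congr 2 <;> · rw [hTdef]; simp [Matrix.toLin'_apply]
  have hint_mapped : Integrable g (Measure.map T volume) := by
    rw [hmap]
    exact hgint.smul_measure ENNReal.ofReal_ne_top
  have hint : Integrable (fun x : Fin d → ℝ => Real.exp (-(1/2) * (x ⬝ᵥ A.mulVec x))) volume := by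
    have := (integrable_map_measure hgcont.aestronglyMeasurable
      hTcont.measurable.aemeasurable).mp hint_mapped
    have heq : g ∘ T = fun x : Fin d → ℝ => Real.exp (-(1/2) * (x ⬝ᵥ A.mulVec x)) := by
      ext x; rw [Function.comp_apply, hcomp x]
    rwa [heq] at this
  have hval : ∫ x : Fin d → ℝ, Real.exp (-(1/2) * (x ⬝ᵥ A.mulVec x)) =
      (Real.sqrt (S.det⁻¹))⁻¹ * (Real.sqrt (2 * Real.pi)) ^ d := by
    have h1 : ∫ x : Fin d → ℝ, Real.exp (-(1/2) * (x ⬝ᵥ A.mulVec x)) =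
        ∫ x, g (T x) := by congr 1; ext x; exact hcomp x
    have h2 : ∫ x, g (T x) = ∫ y, g y ∂(Measure.map T volume) :=
      (integral_map hTcont.measurable.aemeasurable hgcont.aestronglyMeasurable).symm
    rw [h1, h2, hmap, integral_smul_measure, hgstd]
    have hAS : A.det = S.det⁻¹ := by rw [hAdef, Matrix.det_nonsing_inv, Ring.inverse_eq_inv']
    rw [← hAS, hsqrtA]
    rw [ENNReal.toReal_ofReal (abs_nonneg _), abs_of_pos (by positivity : (0:ℝ) < B.det⁻¹)]
    simp [smul_eq_mul]
  exact ⟨hint, hval⟩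

lemma gaussian_isProbability (m : Fin d → ℝ) (hS : S.PosDef) :
    IsProbabilityMeasure (gaussian d m S) := by
  obtain ⟨hint0, hval0⟩ := quad_integral hS
  set C : ℝ := (2 * Real.pi) ^ (-(d : ℝ) / 2) * S.det ^ (-(1 : ℝ) / 2) with hCdef
  have hdetS : 0 < S.det := hS.det_pos
  have h2pi : (0:ℝ) < 2 * Real.pi := by positivity
  have hCpos : 0 < C := by
    apply mul_pos <;> exact Real.rpow_pos_of_pos (by positivity) _
  set f : (Fin d → ℝ) → ℝ :=
    fun θ => Real.exp (-(1/2) * ((θ - m) ⬝ᵥ S⁻¹.mulVec (θ - m))) with hfdef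
  have hint : Integrable f volume := by
    have := hint0.comp_sub_right m
    exact this
  have hintf : ∫ θ, f θ = (Real.sqrt (S.det⁻¹))⁻¹ * (Real.sqrt (2 * Real.pi)) ^ d := by
    rw [hfdef, ← hval0]
    exact MeasureTheory.integral_sub_right_eq_self
      (fun x => Real.exp (-(1/2) * (x ⬝ᵥ S⁻¹.mulVec x))) m
  have htotal : ∫ θ, C * f θ = 1 := by
    rw [MeasureTheory.integral_const_mul, hintf]
    have e1 : (Real.sqrt (2 * Real.pi)) ^ d = (2 * Real.pi) ^ ((d:ℝ) / 2) := by
      rw [Real.sqrt_eq_rpow, ← Real.rpow_natCast ((2 * Real.pi) ^ ((1:ℝ)/2)) d,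
        ← Real.rpow_mul h2pi.le]
      congr 1; ring
    have e2 : (Real.sqrt (S.det⁻¹))⁻¹ = S.det ^ ((1:ℝ) / 2) := by
      rw [Real.sqrt_eq_rpow, Real.inv_rpow hdetS.le, inv_inv]
    rw [hCdef, e1, e2]
    rw [show (2 * Real.pi) ^ (-(d:ℝ) / 2) * S.det ^ (-(1:ℝ) / 2) *
        ((S.det ^ ((1:ℝ)/2)) * (2 * Real.pi) ^ ((d:ℝ)/2)) =
        ((2 * Real.pi) ^ (-(d:ℝ) / 2) * (2 * Real.pi) ^ ((d:ℝ)/2)) *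
        (S.det ^ (-(1:ℝ) / 2) * S.det ^ ((1:ℝ)/2)) by ring]
    rw [← Real.rpow_add h2pi, ← Real.rpow_add hdetS,
      show (-(d:ℝ)/2 + (d:ℝ)/2) = 0 by ring, show (-(1:ℝ)/2 + 1/2) = 0 by ring,
      Real.rpow_zero, Real.rpow_zero]
    norm_num
  constructor
  rw [gaussian, withDensity_apply _ MeasurableSet.univ, setLIntegral_univ]
  have : ∫⁻ θ, ENNReal.ofReal (C * f θ) = ENNReal.ofReal (∫ θ, C * f θ) := by
    rw [← MeasureTheory.ofReal_integral_eq_lintegral_ofReal (hint.const_mul C)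
      (Filter.Eventually.of_forall fun θ => by positivity)]
  rw [hfdef] at this
  rw [this, htotal, ENNReal.ofReal_one]



end gauss

open scoped MatrixOrder in
lemma D_nonneg {d : ℕ} {P F : Matrix (Fin d) (Fin d) ℝ} (hP : P.PosDef) (hF : F.PosDef)
    (θ : Fin d → ℝ) :
    0 ≤ Real.log (P.det / F.det) + (P⁻¹ * F - 1).trace + θ ⬝ᵥ P⁻¹.mulVec θ := by
  classical
  have hPinv : P⁻¹.PosDef := hP.inv
  have hquad : 0 ≤ θ ⬝ᵥ P⁻¹.mulVec θ := by simpa using hPinv.posSemidef.dotProduct_mulVec_nonneg θ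
  set B := CFC.sqrt P⁻¹ with hBdef
  have hBB : B * B = P⁻¹ := CFC.sqrt_mul_sqrt_self P⁻¹ hPinv.posSemidef.nonneg
  have hBpsd : B.PosSemidef := (CFC.sqrt_nonneg P⁻¹).posSemidef
  have hBherm : Bᴴ = B := hBpsd.1
  have hdetPinv : 0 < P⁻¹.det := hPinv.det_pos
  have hBdet2 : B.det * B.det = P⁻¹.det := by rw [← Matrix.det_mul, hBB]
  have hdetP : 0 < P.det := hP.det_pos
  have hBdet_ne : B.det ≠ 0 := by
    intro h; rw [h] at hBdet2; simp only [zero_mul] at hBdet2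
    rw [Matrix.det_nonsing_inv, Ring.inverse_eq_inv'] at hBdet2
    exact (inv_pos.mpr hdetP).ne' hBdet2.symm
  have hBunit : IsUnit B := (Matrix.isUnit_iff_isUnit_det B).2 hBdet_ne.isUnit
  set M := B * F * B with hMdef
  have hMpd : M.PosDef := by
    refine Matrix.PosDef.of_dotProduct_mulVec_pos ?_ ?_
    · show Mᴴ = M
      rw [hMdef, Matrix.conjTranspose_mul, Matrix.conjTranspose_mul, hBherm, hF.1, mul_assoc]
    · intro x hx
      have hBx : B *ᵥ x ≠ 0 :=
        ((Matrix.mulVec_injective_iff_isUnit.mpr hBunit).ne_iff' (by simp)).2 hx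
      have := hF.dotProduct_mulVec_pos hBx
      have hrw : star x ⬝ᵥ M *ᵥ x = star (B *ᵥ x) ⬝ᵥ F *ᵥ (B *ᵥ x) := by
        rw [star_mulVec, hBherm, hMdef, ← Matrix.mulVec_mulVec, ← Matrix.mulVec_mulVec,
          dotProduct_mulVec]
      rwa [hrw]
  set lam := hMpd.1.eigenvalues with hlam
  have hlampos : ∀ i, 0 < lam i := fun i => hMpd.eigenvalues_pos i
  have hdetM : M.det = ∏ i, lam i := by
    have := hMpd.1.det_eq_prod_eigenvalues
    simpa using this
  have htraceM : M.trace = ∑ i, lam i := by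
    simpa using hMpd.1.trace_eq_sum_eigenvalues
  have htraceMPF : M.trace = (P⁻¹ * F).trace := by
    rw [hMdef, Matrix.trace_mul_cycle, hBB]
  have hdetMPF : M.det = P.det⁻¹ * F.det := by
    rw [hMdef, Matrix.det_mul, Matrix.det_mul, mul_comm B.det F.det, mul_assoc, hBdet2,
      Matrix.det_nonsing_inv, Ring.inverse_eq_inv']
    ring
  have hdetF : 0 < F.det := hF.det_pos
  have hlogdetM : Real.log M.det = ∑ i, Real.log (lam i) := by
    rw [hdetM]
    exact Real.log_prod fun i _ => (hlampos i).ne'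
  have hlogratio : Real.log (P.det / F.det) = - Real.log M.det := by
    rw [hdetMPF, Real.log_mul (by positivity) hdetF.ne', Real.log_inv,
      Real.log_div hdetP.ne' hdetF.ne']
    ring
  have htrsub : (P⁻¹ * F - 1).trace = M.trace - d := by
    rw [Matrix.trace_sub, Matrix.trace_one, htraceMPF]
    simp
  have hsum : Real.log (P.det / F.det) + (P⁻¹ * F - 1).trace
      = ∑ i, (lam i - Real.log (lam i) - 1) := by
    rw [hlogratio, htrsub, hlogdetM, htraceM, Finset.sum_sub_distrib, Finset.sum_sub_distrib]
    simp
    ring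
  have hterm : ∀ i, (0:ℝ) ≤ lam i - Real.log (lam i) - 1 := by
    intro i
    have := Real.log_le_sub_one_of_pos (hlampos i)
    linarith
  have : 0 ≤ Real.log (P.det / F.det) + (P⁻¹ * F - 1).trace := by
    rw [hsum]
    exact Finset.sum_nonneg fun i _ => hterm i
  linarith


/-- PAC-Bayesian generalization bound for the fine-tuning stage (Theorem 2):
prior `Q_PT = N(0, Σ_PT)`, posterior `Q_FT = N(θ_FT, Σ_FT)`,
`D(Q_FT,Q_PT) = log(det Σ_PT / det Σ_FT) + tr(Σ_PT⁻¹ Σ_FT − I) + θ_FTᵀ Σ_PT⁻¹ θ_FT`. -/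
theorem finetuning_generalization_bound
    (d N : ℕ) (hd : 1 ≤ d) (hN : 1 ≤ N)
    {Z : Type*} [MeasurableSpace Z] (𝒟 : Measure Z) [IsProbabilityMeasure 𝒟]
    (ℓ : (Fin d → ℝ) → Z → ℝ) (hℓmeas : Measurable (Function.uncurry ℓ))
    (hℓbound : ∀ θ z, ℓ θ z ∈ Set.Icc (0 : ℝ) 1)
    (SigPT SigFT : Matrix (Fin d) (Fin d) ℝ)
    (hPTsym : SigPT.IsSymm) (hPTpd : SigPT.PosDef)
    (hFTsym : SigFT.IsSymm) (hFTpd : SigFT.PosDef)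
    (θFT : Fin d → ℝ)
    (δ : ℝ) (hδ : δ ∈ Set.Ioo (0 : ℝ) 1) :
    (Measure.pi fun _ : Fin N => 𝒟)
      {S : Fin N → Z |
        ∫ θ, ∫ z, ℓ θ z ∂𝒟 ∂(gaussian d θFT SigFT) ≤
          (∫ θ, (1 / (N : ℝ)) * ∑ i : Fin N, ℓ θ (S i) ∂(gaussian d θFT SigFT)) +
            Real.sqrt
              (((Real.log (SigPT.det / SigFT.det) + (SigPT⁻¹ * SigFT - 1).trace +
                    θFT ⬝ᵥ SigPT⁻¹.mulVec θFT) + 2 * Real.log (1 / δ) +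
                  2 * Real.log N + 4) / (4 * N - 2))}
      ≥ ENNReal.ofReal (1 - δ) := by
  obtain ⟨hδ0, hδ1⟩ := hδ
  set Q := gaussian d θFT SigFT with hQ
  haveI hQprob : IsProbabilityMeasure Q := gaussian_isProbability θFT hFTpd
  -- the averaged loss
  set g : Z → ℝ := fun z => ∫ θ, ℓ θ z ∂Q with hgdef
  have hℓz_meas : ∀ z, Measurable fun θ => ℓ θ z := fun z =>
    hℓmeas.comp (measurable_id.prodMk measurable_const)
  have hℓz_int : ∀ z, Integrable (fun θ => ℓ θ z) Q := fun z =>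
    integrable_of_bound Q _ (hℓz_meas z).aestronglyMeasurable 1 fun θ => by
      rcases hℓbound θ z with ⟨h1, h2⟩; rw [abs_le]; constructor <;> linarith
  have hgmeas : Measurable g := by
    have h1 : StronglyMeasurable (Function.uncurry ℓ ∘ Prod.swap :
        Z × (Fin d → ℝ) → ℝ) :=
      (hℓmeas.comp measurable_swap).stronglyMeasurable
    have h2 := h1.integral_prod_right' (ν := Q)
    exact h2.measurable
  have hgmem : ∀ z, g z ∈ Set.Icc (0:ℝ) 1 := by
    intro z
    constructor
    · exact integral_nonneg fun θ => (hℓbound θ z).1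
    · have : ∫ θ, ℓ θ z ∂Q ≤ ∫ _, (1:ℝ) ∂Q :=
        integral_mono (hℓz_int z) (integrable_const _) fun θ => (hℓbound θ z).2
      simpa using this
  -- Fubini
  have hℓ_prod_int : Integrable (Function.uncurry ℓ) (Q.prod 𝒟) :=
    integrable_of_bound _ _ hℓmeas.aestronglyMeasurable 1 fun p => by
      rcases hℓbound p.1 p.2 with ⟨h1, h2⟩
      rw [abs_le]; simp only [Function.uncurry]; constructor <;> linarith
  have hswap : ∫ θ, ∫ z, ℓ θ z ∂𝒟 ∂Q = ∫ z, g z ∂𝒟 :=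
    MeasureTheory.integral_integral_swap hℓ_prod_int
  set μbar : ℝ := ∫ z, g z ∂𝒟 with hμbar
  -- rewrite the empirical risk
  have hemp : ∀ S : Fin N → Z, ∫ θ, (1 / (N : ℝ)) * ∑ i : Fin N, ℓ θ (S i) ∂Q
      = (1 / (N : ℝ)) * ∑ i : Fin N, g (S i) := by
    intro S
    rw [MeasureTheory.integral_const_mul]
    congr 1
    rw [integral_finset_sum _ fun i _ => hℓz_int (S i)]
  -- the deviation bound
  set D : ℝ := Real.log (SigPT.det / SigFT.det) + (SigPT⁻¹ * SigFT - 1).trace +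
    θFT ⬝ᵥ SigPT⁻¹.mulVec θFT with hD
  have hDnn : 0 ≤ D := D_nonneg hPTpd hFTpd θFT
  set num : ℝ := D + 2 * Real.log (1 / δ) + 2 * Real.log N + 4 with hnum
  have hL : 0 < Real.log (1 / δ) := Real.log_pos (by rw [lt_div_iff₀ hδ0]; linarith)
  have hlogN : 0 ≤ Real.log N := Real.log_nonneg (by exact_mod_cast hN)
  have hnum_nn : 0 ≤ num := by rw [hnum]; linarith
  have hnum_ge : 2 * Real.log (1 / δ) ≤ num := by rw [hnum]; linarith
  have hNpos : (0:ℝ) < N := by exact_mod_cast hN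
  have hden : (0:ℝ) < 4 * N - 2 := by
    have : (1:ℝ) ≤ N := by exact_mod_cast hN
    linarith
  set ε : ℝ := Real.sqrt (num / (4 * N - 2)) with hε
  have harg : 0 ≤ num / (4 * N - 2) := div_nonneg hnum_nn hden.le
  have hεnn : 0 ≤ ε := Real.sqrt_nonneg _
  have hεsq : ε ^ 2 = num / (4 * N - 2) := Real.sq_sqrt harg
  have hexp_le : Real.exp (-(2 * N * ε ^ 2)) ≤ δ := by
    have h1 : Real.log (1 / δ) ≤ 2 * N * ε ^ 2 := by
      rw [hεsq]
      have h2 : Real.log (1 / δ) ≤ num / 2 := by linarith [hnum_ge]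
      have h3 : num / 2 ≤ 2 * N * (num / (4 * N - 2)) := by
        rw [show 2 * (N:ℝ) * (num / (4 * N - 2)) = (2 * N * num) / (4 * N - 2) by ring,
          div_le_div_iff₀ (by norm_num : (0:ℝ) < 2) hden]
        nlinarith
      linarith
    have h4 : -(2 * N * ε ^ 2) ≤ Real.log δ := by
      rw [one_div, Real.log_inv] at h1
      linarith
    calc Real.exp (-(2 * N * ε ^ 2)) ≤ Real.exp (Real.log δ) := Real.exp_le_exp.2 h4
    _ = δ := Real.exp_log hδ0
  -- the bad event
  set bad : Set (Fin N → Z) := {S | (N:ℝ) * ε ≤ ∑ i, (μbar - g (S i))} with hbad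
  have hbad_meas : MeasurableSet bad := by
    apply measurableSet_le measurable_const
    exact Finset.measurable_sum _ fun i _ =>
      measurable_const.sub (hgmeas.comp (measurable_pi_apply i))
  have hbad_le : (Measure.pi fun _ : Fin N => 𝒟) bad ≤ ENNReal.ofReal δ := by
    calc (Measure.pi fun _ : Fin N => 𝒟) bad
        ≤ ENNReal.ofReal (Real.exp (-(2 * N * ε ^ 2))) :=
          hoeffding_pi 𝒟 N g hgmeas hgmem ε hεnn
    _ ≤ ENNReal.ofReal δ := ENNReal.ofReal_le_ofReal hexp_le
  have hsubset : badᶜ ⊆ {S : Fin N → Z |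
      ∫ θ, ∫ z, ℓ θ z ∂𝒟 ∂Q ≤
        (∫ θ, (1 / (N : ℝ)) * ∑ i : Fin N, ℓ θ (S i) ∂Q) + ε} := by
    intro S hS
    simp only [hbad, Set.mem_compl_iff, Set.mem_setOf_eq, not_le] at hS
    have hsum : ∑ i : Fin N, (μbar - g (S i)) = N * μbar - ∑ i : Fin N, g (S i) := by
      rw [Finset.sum_sub_distrib]
      simp [mul_comm]
    rw [hsum] at hS
    simp only [Set.mem_setOf_eq]
    rw [hswap, hemp S]
    have hNne : (N:ℝ) ≠ 0 := hNpos.ne'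
    have hlt : (N:ℝ) * μbar < ∑ i : Fin N, g (S i) + N * ε := by linarith
    rw [show (1 / (N : ℝ)) * ∑ i : Fin N, g (S i) + ε
        = (∑ i : Fin N, g (S i) + N * ε) / N by field_simp,
      le_div_iff₀ hNpos]
    nlinarith
  calc ENNReal.ofReal (1 - δ) = 1 - ENNReal.ofReal δ := by
        rw [ENNReal.ofReal_sub _ hδ0.le, ENNReal.ofReal_one]
  _ ≤ 1 - (Measure.pi fun _ : Fin N => 𝒟) bad := by
        exact tsub_le_tsub_left hbad_le 1
  _ = (Measure.pi fun _ : Fin N => 𝒟) badᶜ := (prob_compl_eq_one_sub hbad_meas).symm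
  _ ≤ _ := measure_mono hsubset
end
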